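/- (Lagrangian-IGM) For every pairwise reciprocal matrix A of size n ≥ 1, there exist a unique vector w : Fin n → ℝ and a unique λ ∈ ℝ satisfying the Lagrange system Ḡ.mulVec w + λ • 1 = 0 and ∑ᵢ w i = 1; moreover this w equals w* = (1/c) • (G⁻¹.mulVec 1) and λ = 1 − 1/c, where c = ∑ᵢ ∑ⱼ (G⁻¹) i j; in particular λ equals the negative of the minimal WLS objective value. -/

import Mathlib

open Matrix BigOperators

/-- A pairwise reciprocal matrix (PRM): all entries positive and `A i j * A j i = 1`. -/
def IsPRM {n : ℕ} (A : Matrix (Fin n) (Fin n) ℝ) : Prop :=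
  ∀ i j, 0 < A i j ∧ A i j * A j i = 1

/-- The matrix `Ḡ` with diagonal `(n-1) + ∑_{k ≠ i} (A k i)^2` and
off-diagonal `-(A i j + A j i)`. -/
noncomputable def Gbar {n : ℕ} (A : Matrix (Fin n) (Fin n) ℝ) :
    Matrix (Fin n) (Fin n) ℝ :=
  Matrix.of fun i j =>
    if i = j then ((n : ℝ) - 1) + ∑ k ∈ Finset.univ.filter (fun k => k ≠ i), (A k i) ^ 2
    else -(A i j + A j i)

/-- The all-ones matrix `J`. -/
noncomputable def Jmat (n : ℕ) : Matrix (Fin n) (Fin n) ℝ :=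
  Matrix.of fun _ _ => 1

/-- `G = Ḡ + J`. -/
noncomputable def Gmat {n : ℕ} (A : Matrix (Fin n) (Fin n) ℝ) :
    Matrix (Fin n) (Fin n) ℝ :=
  Gbar A + Jmat n

/-- The weighted least squares objective `f(w) = ∑ i ∑ j (w i - A i j * w j)^2`. -/
noncomputable def wls {n : ℕ} (A : Matrix (Fin n) (Fin n) ℝ) (w : Fin n → ℝ) : ℝ :=
  ∑ i, ∑ j, (w i - A i j * w j) ^ 2

/-! With `J w = (∑ w) • 1`, the constraint `∑ w = 1` turns `Ḡ w + λ • 1 = 0` into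
`G w = (1 - λ) • 1`, so `w = (1 - λ) • G⁻¹ 1` and summing gives `(1 - λ) c = 1`.
`G` is positive definite since `wᵀ G w = f(w) + (∑ w)²` and `f(w) = 0` means
`w i = A i j * w j`, whence `∑ w = (∑ i, A i j) * w j` with a positive factor; so
`c = 1ᵀ G⁻¹ 1 > 0`.
At the solution, `f(w*) = w*ᵀ Ḡ w* = -λ ∑ w* = -λ`. -/

lemma Matrix.PosDef.sum_entries_pos {ι R : Type*} [Fintype ι] [Nonempty ι] [Ring R]
    [PartialOrder R] [StarRing R] [Nontrivial R] {M : Matrix ι ι R} (hM : M.PosDef) :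
    0 < ∑ i, ∑ j, M i j := by
  simpa [dotProduct, mulVec] using hM.dotProduct_mulVec_pos (one_ne_zero (α := ι → R))

section LagrangeSystem

variable {ι K : Type*} [Fintype ι] [CommRing K]

lemma allOnes_mulVec (w : ι → K) :
    (of fun _ _ => 1 : Matrix ι ι K) *ᵥ w = (∑ i, w i) • 1 := by
  ext; simp [mulVec, dotProduct]

lemma dotProduct_mulVec_of_lagrange {M : Matrix ι ι K} {w : ι → K} {lam : K}
    (hM : M *ᵥ w + lam • 1 = 0) (hw : ∑ i, w i = 1) : w ⬝ᵥ (M *ᵥ w) = -lam := by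
  rw [eq_neg_of_add_eq_zero_left hM, dotProduct_neg, dotProduct_smul, dotProduct_one, hw,
    smul_eq_mul, mul_one]

lemma lagrange_system_iff_mulVec_eq {G M : Matrix ι ι K} (hGM : G = M + of fun _ _ => 1)
    (w : ι → K) (lam : K) :
    (M *ᵥ w + lam • 1 = 0 ∧ ∑ i, w i = 1) ↔
      (G *ᵥ w = (1 - lam) • 1 ∧ ∑ i, w i = 1) := by
  refine and_congr_left fun hw => ?_
  rw [hGM, add_mulVec, allOnes_mulVec, hw, one_smul]
  constructor <;> intro h <;> linear_combination (norm := module) h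

end LagrangeSystem

theorem lagrange_system_iff {ι K : Type*} [Fintype ι] [DecidableEq ι] [Field K]
    {G M : Matrix ι ι K} (hGM : G = M + of fun _ _ => 1) (hG : IsUnit G)
    {c : K} (hc : ∑ i, ∑ j, G⁻¹ i j = c) (hc0 : c ≠ 0) (p : (ι → K) × K) :
    (M *ᵥ p.1 + p.2 • 1 = 0 ∧ ∑ i, p.1 i = 1) ↔ p = ((1 / c) • (G⁻¹ *ᵥ 1), 1 - 1 / c) := by
  obtain ⟨w, lam⟩ := p
  have hdet : IsUnit G.det := (isUnit_iff_isUnit_det G).1 hG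
  have hu : ∑ i, (G⁻¹ *ᵥ 1) i = c := by simpa [mulVec, dotProduct] using hc
  rw [lagrange_system_iff_mulVec_eq hGM, Prod.mk.injEq]
  constructor
  · rintro ⟨hGw, hw⟩
    have hw' : w = (1 - lam) • (G⁻¹ *ᵥ 1) := by
      rw [← mulVec_smul, ← hGw, mulVec_mulVec, nonsing_inv_mul _ hdet, one_mulVec]
    rw [hw'] at hw
    simp only [Pi.smul_apply, smul_eq_mul, ← Finset.mul_sum, hu] at hw
    have hlam : 1 - lam = 1 / c := eq_one_div_of_mul_eq_one_left hw
    exact ⟨hlam ▸ hw', by rw [← hlam, sub_sub_cancel]⟩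
  · rintro ⟨rfl, rfl⟩
    refine ⟨?_, ?_⟩
    · rw [mulVec_smul, mulVec_mulVec, mul_nonsing_inv _ hdet, one_mulVec, sub_sub_cancel]
    · simp only [Pi.smul_apply, smul_eq_mul, ← Finset.mul_sum, hu, one_div_mul_cancel hc0]

section PRM

variable {n : ℕ} {A : Matrix (Fin n) (Fin n) ℝ}

lemma IsPRM.diag_eq_one (hA : IsPRM A) (i : Fin n) : A i i = 1 :=
  (mul_self_eq_one_iff.1 (hA i i).2).resolve_right (by linarith [(hA i i).1])

lemma Gbar_eq_diagonal_sub (hA : ∀ i, A i i = 1) :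
    Gbar A = diagonal (fun i => n + ∑ k, A k i ^ 2) - (A + Aᵀ) := by
  ext i j
  rcases eq_or_ne i j with rfl | hij
  · simp only [Gbar, of_apply, if_pos, Matrix.sub_apply, Matrix.add_apply, transpose_apply,
      diagonal_apply_eq, hA, Finset.filter_ne']
    rw [← Finset.add_sum_erase _ _ (Finset.mem_univ i), hA]
    ring
  · simp [Gbar, hij]

lemma wls_eq_sum_sub_dotProduct (w : Fin n → ℝ) :
    wls A w = ∑ i, (n + ∑ k, A k i ^ 2) * w i ^ 2 - 2 * (w ⬝ᵥ (A *ᵥ w)) := by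
  have hcross : ∑ i, ∑ j, 2 * w i * (A i j * w j) = 2 * (w ⬝ᵥ (A *ᵥ w)) := by
    simp only [dotProduct, mulVec, Finset.mul_sum, mul_assoc]
  have hsq : ∑ i, ∑ j, (A i j * w j) ^ 2 = ∑ j, (∑ k, A k j ^ 2) * w j ^ 2 := by
    rw [Finset.sum_comm]
    simp only [Finset.sum_mul, mul_pow]
  simp only [wls, sub_sq, Finset.sum_add_distrib, Finset.sum_sub_distrib, hcross, hsq, add_mul,
    Finset.sum_const, Finset.card_univ, Fintype.card_fin, nsmul_eq_mul]
  ring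

lemma dotProduct_Gbar_mulVec (hA : ∀ i, A i i = 1) (w : Fin n → ℝ) :
    w ⬝ᵥ (Gbar A *ᵥ w) = wls A w := by
  have hdiag (d : Fin n → ℝ) : w ⬝ᵥ (diagonal d *ᵥ w) = ∑ i, d i * w i ^ 2 := by
    simp only [mulVec_diagonal, dotProduct]
    exact Finset.sum_congr rfl fun i _ => by ring
  rw [Gbar_eq_diagonal_sub hA, wls_eq_sum_sub_dotProduct, sub_mulVec, add_mulVec,
    dotProduct_sub, dotProduct_add, dotProduct_mulVec w Aᵀ, vecMul_transpose,
    dotProduct_comm (A *ᵥ w), hdiag]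
  ring

lemma wls_eq_zero_iff (w : Fin n → ℝ) : wls A w = 0 ↔ ∀ i j, w i = A i j * w j := by
  simp only [wls]
  rw [Finset.sum_eq_zero_iff_of_nonneg fun i _ => Finset.sum_nonneg fun j _ => sq_nonneg _]
  simp [Finset.sum_eq_zero_iff_of_nonneg fun _ _ => sq_nonneg _, sub_eq_zero]

lemma eq_zero_of_wls_eq_zero (hA : ∀ i j, 0 < A i j) {w : Fin n → ℝ} (h0 : wls A w = 0)
    (hs : ∑ i, w i = 0) : w = 0 := by
  funext j
  have hsum : (∑ i, A i j) * w j = 0 := by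
    rw [Finset.sum_mul, ← hs]
    exact Finset.sum_congr rfl fun i _ => ((wls_eq_zero_iff w).1 h0 i j).symm
  exact (mul_eq_zero.1 hsum).resolve_left
    (Finset.sum_pos (fun i _ => hA i j) ⟨j, Finset.mem_univ j⟩).ne'

lemma wls_nonneg (w : Fin n → ℝ) : 0 ≤ wls A w :=
  Finset.sum_nonneg fun _ _ => Finset.sum_nonneg fun _ _ => sq_nonneg _

lemma isSymm_Gbar : (Gbar A).IsSymm := by
  refine IsSymm.ext fun i j => ?_
  rcases eq_or_ne i j with rfl | hij
  · rfl
  · simp [Gbar, hij, hij.symm, add_comm]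

lemma Gmat_posDef (hA : IsPRM A) : (Gmat A).PosDef := by
  have hsymm : (Gmat A).IsSymm := isSymm_Gbar.add (IsSymm.ext fun _ _ => rfl)
  refine .of_dotProduct_mulVec_pos (isHermitian_iff_isSymm.2 hsymm) fun x hx => ?_
  have hquad : x ⬝ᵥ (Gmat A *ᵥ x) = wls A x + (∑ i, x i) ^ 2 := by
    rw [Gmat, Jmat, add_mulVec, allOnes_mulVec, dotProduct_add,
      dotProduct_Gbar_mulVec hA.diag_eq_one, dotProduct_smul, dotProduct_one, smul_eq_mul, sq]
  rw [star_trivial, hquad]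
  by_contra! hle
  have hf := wls_nonneg (A := A) x
  have hs : (∑ i, x i) ^ 2 = 0 := by linarith [sq_nonneg (∑ i, x i)]
  exact hx (eq_zero_of_wls_eq_zero (fun i j => (hA i j).1) (by linarith [sq_nonneg (∑ i, x i)])
    (pow_eq_zero_iff two_ne_zero |>.1 hs))

end PRM

/-- Lagrangian-IGM: there exist a unique `w` and a unique `λ` with
`Ḡ.mulVec w + λ • 1 = 0` and `∑ i, w i = 1`; moreover `w = w*` and `λ = 1 − 1/c`,
which is the negative of the minimal WLS objective value. -/
theorem lagrangian_igm {n : ℕ} (hn : 1 ≤ n)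
    (A : Matrix (Fin n) (Fin n) ℝ) (hA : IsPRM A) :
    let c : ℝ := ∑ i, ∑ j, (Gmat A)⁻¹ i j
    let wstar : Fin n → ℝ := (1 / c) • ((Gmat A)⁻¹.mulVec 1)
    (∃! p : (Fin n → ℝ) × ℝ,
      (Gbar A).mulVec p.1 + p.2 • (1 : Fin n → ℝ) = 0 ∧ ∑ i, p.1 i = 1) ∧
    (∀ p : (Fin n → ℝ) × ℝ,
      ((Gbar A).mulVec p.1 + p.2 • (1 : Fin n → ℝ) = 0 ∧ ∑ i, p.1 i = 1) →
        p.1 = wstar ∧ p.2 = 1 - 1 / c) ∧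
    1 - 1 / c = -(wls A wstar) := by
  intro c wstar
  have : Nonempty (Fin n) := ⟨⟨0, hn⟩⟩
  have hG : (Gmat A).PosDef := Gmat_posDef hA
  have hsys := lagrange_system_iff (M := Gbar A) rfl hG.isUnit rfl hG.inv.sum_entries_pos.ne'
  have hstar := (hsys (wstar, 1 - 1 / c)).2 rfl
  refine ⟨⟨_, hstar, fun p hp => (hsys p).1 hp⟩, fun p hp => Prod.ext_iff.1 ((hsys p).1 hp), ?_⟩
  rw [← dotProduct_Gbar_mulVec hA.diag_eq_one, dotProduct_mulVec_of_lagrange hstar.1 hstar.2,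
    neg_neg]
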